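/- In minimum-cost weighted sorting of an unweighted star with token permutation having ℓ ≥ 1 nontrivial locked cycles, every swap sequence must contain, beyond the D_w token-moves along shortest paths, at least 2ℓ additional token moves (two per nontrivial locked cycle). -/

import Mathlib

/-- Distance between two vertices of the star with center `0` on `Fin (n+1)`. -/
def starDist (n : ℕ) (u v : Fin (n + 1)) : ℕ :=
  if u = v then 0 else if u = 0 ∨ v = 0 then 1 else 2

/-- Star token swapping: a swap exchanges the center token with a leaf token. -/
def applyStarSwaps (n : ℕ) (π : Equiv.Perm (Fin (n + 1))) (s : List (Fin (n + 1))) :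
    Equiv.Perm (Fin (n + 1)) :=
  s.foldl (fun σ v => σ * Equiv.swap 0 v) π

/-!
Each swap moves two tokens by one edge each, so by the triangle inequality `D_w` drops by at
most 2 per swap. The number of locked cycles drops (by at most one) only when the swapped leaf
`v` lies on a locked cycle, and such a swap does not decrease `D_w` at all: the token at `v`,
two edges from its target, reaches the center, one edge from it, while the center token, whose
target is not `v`, lands on `v`, two edges from its target. Hence `D_w + 2ℓ` drops by at most 2
per swap, and it vanishes on the identity.
-/

open Equiv Finset

variable {n : ℕ}

lemma Finset.sum_le_sum_of_eq_off_pair {α M : Type*} [Fintype α] [DecidableEq α]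
    [AddCommMonoid M] [PartialOrder M] [IsOrderedAddMonoid M] {f g : α → M} {a b : α}
    (hab : a ≠ b) (hfg : ∀ x, x ≠ a → x ≠ b → f x = g x) (hle : f a + f b ≤ g a + g b) :
    ∑ x, f x ≤ ∑ x, g x := by
  rw [← sum_add_sum_compl {a, b} f, ← sum_add_sum_compl {a, b} g, sum_pair hab, sum_pair hab]
  refine add_le_add hle (sum_congr rfl fun x hx => ?_).le
  simp only [mem_compl, mem_insert, mem_singleton, not_or] at hx
  exact hfg x hx.1 hx.2

lemma starDist_self (u : Fin (n + 1)) : starDist n u u = 0 := if_pos rfl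

lemma starDist_comm (u v : Fin (n + 1)) : starDist n u v = starDist n v u := by
  unfold starDist
  simp only [eq_comm, or_comm]

lemma starDist_triangle (u v w : Fin (n + 1)) :
    starDist n u w ≤ starDist n u v + starDist n v w := by
  unfold starDist
  split_ifs <;> simp_all

/-- The paper's `D_w`. -/
def displacement (π : Perm (Fin (n + 1))) : ℕ := ∑ x, starDist n x (π x)

def lockedCycles (π : Perm (Fin (n + 1))) : Finset (Perm (Fin (n + 1))) :=
  π.cycleFactorsFinset.filter fun c => c 0 = 0

lemma sum_starDist_inv_eq_displacement (π : Perm (Fin (n + 1))) :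
    ∑ t, starDist n (π⁻¹ t) t = displacement π := by
  rw [displacement, ← Equiv.sum_comp π]
  simp

lemma displacement_one : displacement (1 : Perm (Fin (n + 1))) = 0 := by
  simp [displacement, starDist_self]

lemma displacement_swap_le (v : Fin (n + 1)) : displacement (swap 0 v) ≤ 2 := by
  calc displacement (swap 0 v)
      ≤ ∑ x, if x ∈ ({0, v} : Finset (Fin (n + 1))) then 1 else 0 := by
        refine sum_le_sum fun x _ => ?_
        unfold starDist
        by_cases hx0 : x = 0 <;> by_cases hxv : x = v <;> simp_all [swap_apply_of_ne_of_ne]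
    _ ≤ 2 := by
        rw [sum_ite_mem, univ_inter, sum_const, smul_eq_mul, mul_one]
        exact card_insert_le _ _

lemma displacement_le_displacement_mul_add (π σ : Perm (Fin (n + 1))) :
    displacement π ≤ displacement (π * σ) + displacement σ := by
  calc displacement π = ∑ x, starDist n (σ x) (π (σ x)) := (Equiv.sum_comp σ _).symm
    _ ≤ ∑ x, (starDist n x (σ x) + starDist n x ((π * σ) x)) :=
        sum_le_sum fun x _ => starDist_comm x (σ x) ▸ starDist_triangle _ _ _
    _ = displacement (π * σ) + displacement σ := by
        rw [sum_add_distrib, add_comm]; rfl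

lemma mem_lockedCycles_mul_swap {π c : Perm (Fin (n + 1))} {v : Fin (n + 1)}
    (hc : c ∈ lockedCycles π) (hv : v ∉ c.support) : c ∈ lockedCycles (π * swap 0 v) := by
  rw [lockedCycles, mem_filter, Perm.mem_cycleFactorsFinset_iff] at hc ⊢
  obtain ⟨⟨hcycle, hagree⟩, hc0⟩ := hc
  refine ⟨⟨hcycle, fun x hx => ?_⟩, hc0⟩
  have hx0 : x ≠ 0 := by rintro rfl; exact Perm.mem_support.mp hx hc0
  have hxv : x ≠ v := by rintro rfl; exact hv hx
  rw [hagree x hx, Perm.mul_apply, swap_apply_of_ne_of_ne hx0 hxv]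

lemma card_lockedCycles_le_mul_swap_add_one (π : Perm (Fin (n + 1))) (v : Fin (n + 1)) :
    #(lockedCycles π) ≤ #(lockedCycles (π * swap 0 v)) + 1 := by
  refine (card_le_card fun c hc => ?_).trans (card_insert_le (π.cycleOf v) _)
  by_cases hv : v ∈ c.support
  · exact Perm.cycle_is_cycleOf hv (mem_filter.mp hc).1 ▸ mem_insert_self _ _
  · exact mem_insert_of_mem (mem_lockedCycles_mul_swap hc hv)

lemma displacement_le_mul_swap_of_mem_lockedCycles {π c : Perm (Fin (n + 1))} {v : Fin (n + 1)}
    (hc : c ∈ lockedCycles π) (hv : v ∈ c.support) :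
    displacement π ≤ displacement (π * swap 0 v) := by
  obtain ⟨hcπ, hc0⟩ := mem_filter.mp hc
  have h0 : (0 : Fin (n + 1)) ∉ c.support := Perm.notMem_support.mpr hc0
  have hv0 : v ≠ 0 := by rintro rfl; exact h0 hv
  have hπv : π v ∈ c.support := (Perm.mem_cycleFactorsFinset_support hcπ v).mpr hv
  have hπ0 : π 0 ∉ c.support := by rwa [Perm.mem_cycleFactorsFinset_support hcπ]
  have hπvv : π v ≠ v := Perm.mem_support.mp (Perm.mem_cycleFactorsFinset_support_le hcπ hv)
  refine sum_le_sum_of_eq_off_pair hv0.symm (fun x hx0 hxv => ?_) ?_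
  · rw [Perm.mul_apply, swap_apply_of_ne_of_ne hx0 hxv]
  · have hπv0 : π v ≠ 0 := by rintro h; exact h0 (h ▸ hπv)
    have hπ0v : π 0 ≠ v := by rintro h; exact hπ0 (h ▸ hv)
    simp only [Perm.mul_apply, swap_apply_left, swap_apply_right, starDist]
    split_ifs <;> grind

lemma displacement_add_card_lockedCycles_le_mul_swap (π : Perm (Fin (n + 1))) (v : Fin (n + 1)) :
    displacement π + 2 * #(lockedCycles π) ≤
      displacement (π * swap 0 v) + 2 * #(lockedCycles (π * swap 0 v)) + 2 := by
  by_cases hbreak : ∃ c ∈ lockedCycles π, v ∈ c.support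
  · obtain ⟨c, hc, hv⟩ := hbreak
    have := displacement_le_mul_swap_of_mem_lockedCycles hc hv
    have := card_lockedCycles_le_mul_swap_add_one π v
    omega
  · push Not at hbreak
    have := displacement_le_displacement_mul_add π (swap 0 v)
    have := displacement_swap_le v
    have := card_le_card fun c hc => mem_lockedCycles_mul_swap hc (hbreak c hc)
    omega

lemma displacement_add_card_lockedCycles_le_length {π : Perm (Fin (n + 1))}
    {s : List (Fin (n + 1))} (hsort : applyStarSwaps n π s = 1) :
    displacement π + 2 * #(lockedCycles π) ≤ 2 * s.length := by
  induction s generalizing π with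
  | nil =>
    obtain rfl : π = 1 := hsort
    simp [displacement_one, lockedCycles]
  | cons v s ih =>
    have := ih (π := π * swap 0 v) hsort
    have := displacement_add_card_lockedCycles_le_mul_swap π v
    simp only [List.length_cons]
    omega

theorem stmt13_general (n : ℕ) (π : Equiv.Perm (Fin (n + 1)))
    (s : List (Fin (n + 1)))
    (hsort : applyStarSwaps n π s = 1) :
    (∑ t : Fin (n + 1), starDist n (π⁻¹ t) t) +
        2 * (π.cycleFactorsFinset.filter fun c => c 0 = 0).card ≤
      2 * s.length := by
  rw [sum_starDist_inv_eq_displacement]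
  exact displacement_add_card_lockedCycles_le_length hsort

/-- If the token permutation on a star has `ℓ ≥ 1` nontrivial locked cycles
(cycles of length ≥ 2 avoiding the center `0`), then every sorting swap sequence
makes, beyond the `D_w = Σ_t d(t)` token moves along shortest paths, at least `2ℓ`
additional token moves (each swap moves two tokens). -/
theorem stmt13 (n : ℕ) (π : Equiv.Perm (Fin (n + 1)))
    (hl : 1 ≤ (π.cycleFactorsFinset.filter fun c => c 0 = 0).card)
    (s : List (Fin (n + 1))) (hleaf : ∀ v ∈ s, v ≠ 0)
    (hsort : applyStarSwaps n π s = 1) :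
    (∑ t : Fin (n + 1), starDist n (π⁻¹ t) t) +
        2 * (π.cycleFactorsFinset.filter fun c => c 0 = 0).card ≤
      2 * s.length :=
  stmt13_general n π s hsort
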